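/- arXiv:0712.3725 — 2 statements merged into one kernel-verified Lean document; each statement's English description precedes it below -/
import Mathlib

section
/- For y ∈ (0,1], the symmetrized Marchenko–Pastur density integrates to 1: ∫ p̃_y(x) dx over [-(1+√y), -(1-√y)] ∪ [(1-√y), (1+√y)] equals 1. -/
/-!
With `α = 1 - √y` and `β = 1 + √y`, the density is even and vanishes off `α ≤ |x| ≤ β`, so its
integral is `2 (2πy)⁻¹ ∫_α^β √((x² - α²)(β² - x²)) / x dx`. This integral is `π (β - α)² / 4 = π y`,
read off from an explicit primitive made of the square root itself and two arcsines that both run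
from `-π/2` to `π/2` on `[α, β]`.
-/

open Real MeasureTheory Set

section

variable {α β x : ℝ}

theorem hasDerivAt_sqrt_mul_sub_sq (hq : (x ^ 2 - α ^ 2) * (β ^ 2 - x ^ 2) ≠ 0) :
    HasDerivAt (fun x => √((x ^ 2 - α ^ 2) * (β ^ 2 - x ^ 2)))
      (x * (α ^ 2 + β ^ 2 - 2 * x ^ 2) / √((x ^ 2 - α ^ 2) * (β ^ 2 - x ^ 2))) x := by
  have h₁ : HasDerivAt (fun x => x ^ 2 - α ^ 2) (2 * x) x := by
    simpa using (hasDerivAt_pow 2 x).sub_const (α ^ 2)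
  have h₂ : HasDerivAt (fun x => β ^ 2 - x ^ 2) (-(2 * x)) x := by
    simpa using (hasDerivAt_pow 2 x).const_sub (β ^ 2)
  have hq' : HasDerivAt (fun x => (x ^ 2 - α ^ 2) * (β ^ 2 - x ^ 2))
      (2 * x * (β ^ 2 - x ^ 2) + (x ^ 2 - α ^ 2) * -(2 * x)) x := h₁.mul h₂
  refine (hq'.sqrt hq).congr_deriv ?_
  field_simp
  ring

theorem hasDerivAt_arcsin_two_mul_sq_sub (h₁ : α ^ 2 < x ^ 2) (h₂ : x ^ 2 < β ^ 2) :
    HasDerivAt (fun x => arcsin ((2 * x ^ 2 - α ^ 2 - β ^ 2) / (β ^ 2 - α ^ 2)))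
      (2 * x / √((x ^ 2 - α ^ 2) * (β ^ 2 - x ^ 2))) x := by
  have hd : 0 < β ^ 2 - α ^ 2 := by linarith
  set s := √((x ^ 2 - α ^ 2) * (β ^ 2 - x ^ 2))
  have hs : 0 < s := sqrt_pos.2 (by nlinarith)
  have hs2 : s ^ 2 = (x ^ 2 - α ^ 2) * (β ^ 2 - x ^ 2) := sq_sqrt (by nlinarith)
  have hw : HasDerivAt (fun x => (2 * x ^ 2 - α ^ 2 - β ^ 2) / (β ^ 2 - α ^ 2))
      (4 * x / (β ^ 2 - α ^ 2)) x := by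
    refine ((((hasDerivAt_pow 2 x).const_mul 2).sub_const (α ^ 2)).sub_const (β ^ 2)).div_const
      (β ^ 2 - α ^ 2) |>.congr_deriv ?_
    push_cast
    ring
  have hne : (2 * x ^ 2 - α ^ 2 - β ^ 2) / (β ^ 2 - α ^ 2) ≠ -1 ∧
      (2 * x ^ 2 - α ^ 2 - β ^ 2) / (β ^ 2 - α ^ 2) ≠ 1 := by
    constructor <;> intro h <;> rw [div_eq_iff hd.ne'] at h <;> linarith
  have hsqrt : √(1 - ((2 * x ^ 2 - α ^ 2 - β ^ 2) / (β ^ 2 - α ^ 2)) ^ 2)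
      = 2 * s / (β ^ 2 - α ^ 2) := by
    rw [← sqrt_sq (by positivity : 0 ≤ 2 * s / (β ^ 2 - α ^ 2))]
    congr 1
    field_simp
    rw [hs2]
    ring
  refine ((hasDerivAt_arcsin hne.1 hne.2).comp x hw).congr_deriv ?_
  rw [hsqrt]
  field_simp
  ring

theorem hasDerivAt_arcsin_sub_div_sq (hα : 0 < α) (hαx : α < x) (hxβ : x < β) :
    HasDerivAt
      (fun x => arcsin (((α ^ 2 + β ^ 2) * x ^ 2 - 2 * α ^ 2 * β ^ 2) / ((β ^ 2 - α ^ 2) * x ^ 2)))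
      (2 * α * β / (x * √((x ^ 2 - α ^ 2) * (β ^ 2 - x ^ 2)))) x := by
  have hx : 0 < x := hα.trans hαx
  have hβ : 0 < β := hx.trans hxβ
  have h₁ : α ^ 2 < x ^ 2 := by nlinarith
  have h₂ : x ^ 2 < β ^ 2 := by nlinarith
  have hd : 0 < β ^ 2 - α ^ 2 := by linarith
  have hdx : 0 < (β ^ 2 - α ^ 2) * x ^ 2 := by positivity
  set s := √((x ^ 2 - α ^ 2) * (β ^ 2 - x ^ 2))
  have hs : 0 < s := sqrt_pos.2 (by nlinarith)
  have hs2 : s ^ 2 = (x ^ 2 - α ^ 2) * (β ^ 2 - x ^ 2) := sq_sqrt (by nlinarith)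
  have hw : HasDerivAt
      (fun x => ((α ^ 2 + β ^ 2) * x ^ 2 - 2 * α ^ 2 * β ^ 2) / ((β ^ 2 - α ^ 2) * x ^ 2))
      (4 * α ^ 2 * β ^ 2 / ((β ^ 2 - α ^ 2) * x ^ 3)) x := by
    refine ((((hasDerivAt_pow 2 x).const_mul (α ^ 2 + β ^ 2)).sub_const (2 * α ^ 2 * β ^ 2)).div
      ((hasDerivAt_pow 2 x).const_mul (β ^ 2 - α ^ 2)) hdx.ne').congr_deriv ?_
    field_simp
    ring
  have hne : ((α ^ 2 + β ^ 2) * x ^ 2 - 2 * α ^ 2 * β ^ 2) / ((β ^ 2 - α ^ 2) * x ^ 2) ≠ -1 ∧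
      ((α ^ 2 + β ^ 2) * x ^ 2 - 2 * α ^ 2 * β ^ 2) / ((β ^ 2 - α ^ 2) * x ^ 2) ≠ 1 := by
    have hβx : 0 < β ^ 2 * (β ^ 2 - x ^ 2) := mul_pos (by positivity) (by linarith)
    have hαx : 0 < α ^ 2 * (β ^ 2 - x ^ 2) := mul_pos (by positivity) (by linarith)
    constructor <;> intro h <;> rw [div_eq_iff hdx.ne'] at h <;> nlinarith
  have hsqrt :
      √(1 - (((α ^ 2 + β ^ 2) * x ^ 2 - 2 * α ^ 2 * β ^ 2) / ((β ^ 2 - α ^ 2) * x ^ 2)) ^ 2)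
        = 2 * α * β * s / ((β ^ 2 - α ^ 2) * x ^ 2) := by
    rw [← sqrt_sq (by positivity : 0 ≤ 2 * α * β * s / ((β ^ 2 - α ^ 2) * x ^ 2))]
    congr 1
    field_simp
    rw [hs2]
    ring
  refine ((hasDerivAt_arcsin hne.1 hne.2).comp x hw).congr_deriv ?_
  rw [hsqrt]
  field_simp
  ring


/- For `α = 0` the argument of the last arcsine is constantly `1` (and `0 / 0 = 0` at `x = 0`),
so that term is dealt with through its vanishing coefficient. -/
noncomputable def marchenkoPasturPrimitive (α β x : ℝ) : ℝ :=
  √((x ^ 2 - α ^ 2) * (β ^ 2 - x ^ 2)) / 2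
    + (α ^ 2 + β ^ 2) / 4 * arcsin ((2 * x ^ 2 - α ^ 2 - β ^ 2) / (β ^ 2 - α ^ 2))
    - α * β / 2 *
      arcsin (((α ^ 2 + β ^ 2) * x ^ 2 - 2 * α ^ 2 * β ^ 2) / ((β ^ 2 - α ^ 2) * x ^ 2))

theorem hasDerivAt_marchenkoPasturPrimitive (hα : 0 ≤ α) (hαx : α < x) (hxβ : x < β) :
    HasDerivAt (marchenkoPasturPrimitive α β) (√((x ^ 2 - α ^ 2) * (β ^ 2 - x ^ 2)) / x) x := by
  have hx : 0 < x := hα.trans_lt hαx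
  have h₁ : α ^ 2 < x ^ 2 := by nlinarith
  have h₂ : x ^ 2 < β ^ 2 := by nlinarith
  have hq : 0 < (x ^ 2 - α ^ 2) * (β ^ 2 - x ^ 2) := mul_pos (by linarith) (by linarith)
  have h₃ : HasDerivAt
      (fun x => α * β / 2 *
        arcsin (((α ^ 2 + β ^ 2) * x ^ 2 - 2 * α ^ 2 * β ^ 2) / ((β ^ 2 - α ^ 2) * x ^ 2)))
      (α * β / 2 * (2 * α * β / (x * √((x ^ 2 - α ^ 2) * (β ^ 2 - x ^ 2))))) x := by
    rcases hα.eq_or_lt with rfl | hα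
    · simpa using hasDerivAt_const x (0 : ℝ)
    · exact (hasDerivAt_arcsin_sub_div_sq hα hαx hxβ).const_mul _
  refine ((((hasDerivAt_sqrt_mul_sub_sq hq.ne').div_const 2).add
    ((hasDerivAt_arcsin_two_mul_sq_sub h₁ h₂).const_mul _)).sub h₃).congr_deriv ?_
  have hs : 0 < √((x ^ 2 - α ^ 2) * (β ^ 2 - x ^ 2)) := sqrt_pos.2 hq
  field_simp
  rw [sq_sqrt hq.le]
  ring

theorem continuousOn_marchenkoPasturPrimitive (hα : 0 ≤ α) (hαβ : α < β) :
    ContinuousOn (marchenkoPasturPrimitive α β) (Icc α β) := by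
  unfold marchenkoPasturPrimitive
  rcases hα.eq_or_lt with rfl | hα
  · simp only [zero_mul, zero_div, sub_zero]
    fun_prop
  · refine (Continuous.continuousOn (by fun_prop)).sub (continuousOn_const.mul
      (continuous_arcsin.comp_continuousOn (ContinuousOn.div (by fun_prop) (by fun_prop) ?_)))
    intro x hx
    have : 0 < x := hα.trans_le hx.1
    have : α ^ 2 < β ^ 2 := by nlinarith
    exact (mul_pos (by linarith) (by positivity)).ne'

theorem marchenkoPasturPrimitive_sub (hα : 0 ≤ α) (hαβ : α < β) :
    marchenkoPasturPrimitive α β β - marchenkoPasturPrimitive α β α = π / 4 * (β - α) ^ 2 := by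
  have hβ : 0 < β := hα.trans_lt hαβ
  have hd : β ^ 2 - α ^ 2 ≠ 0 := by nlinarith
  have hleft : α * β / 2 *
      arcsin (((α ^ 2 + β ^ 2) * α ^ 2 - 2 * α ^ 2 * β ^ 2) / ((β ^ 2 - α ^ 2) * α ^ 2))
        = α * β / 2 * arcsin (-1) := by
    rcases hα.eq_or_lt with rfl | hα
    · simp
    · rw [show ((α ^ 2 + β ^ 2) * α ^ 2 - 2 * α ^ 2 * β ^ 2) / ((β ^ 2 - α ^ 2) * α ^ 2) = -1 by
        field_simp; ring]
  have h₁ : (2 * β ^ 2 - α ^ 2 - β ^ 2) / (β ^ 2 - α ^ 2) = 1 := by field_simp; ring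
  have h₂ : (2 * α ^ 2 - α ^ 2 - β ^ 2) / (β ^ 2 - α ^ 2) = -1 := by field_simp; ring
  have h₃ : ((α ^ 2 + β ^ 2) * β ^ 2 - 2 * α ^ 2 * β ^ 2) / ((β ^ 2 - α ^ 2) * β ^ 2) = 1 := by
    field_simp; ring
  simp only [marchenkoPasturPrimitive, hleft, h₁, h₂, h₃, sub_self, mul_zero, zero_mul, sqrt_zero,
    arcsin_one, arcsin_neg_one]
  ring

theorem integral_sqrt_mul_sub_sq_div_self (hα : 0 ≤ α) (hαβ : α < β) :
    ∫ x in α..β, √((x ^ 2 - α ^ 2) * (β ^ 2 - x ^ 2)) / x = π / 4 * (β - α) ^ 2 := by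
  have hcont := continuousOn_marchenkoPasturPrimitive hα hαβ
  have hderiv : ∀ x ∈ Ioo α β, HasDerivAt (marchenkoPasturPrimitive α β)
      (√((x ^ 2 - α ^ 2) * (β ^ 2 - x ^ 2)) / x) x :=
    fun x hx => hasDerivAt_marchenkoPasturPrimitive hα hx.1 hx.2
  have hint : IntervalIntegrable (fun x => √((x ^ 2 - α ^ 2) * (β ^ 2 - x ^ 2)) / x) volume α β :=
    (intervalIntegrable_iff_integrableOn_Ioc_of_le hαβ.le).2 <|
      intervalIntegral.integrableOn_deriv_of_nonneg hcont hderiv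
        fun x hx => div_nonneg (sqrt_nonneg _) (hα.trans hx.1.le)
  rw [intervalIntegral.integral_eq_sub_of_hasDerivAt_of_le hαβ.le hcont hderiv hint,
    marchenkoPasturPrimitive_sub hα hαβ]

theorem setIntegral_union_Icc_neg_eq_two_mul {p g : ℝ → ℝ} (hα : 0 ≤ α) (hαβ : α ≤ β)
    (hp : ∀ x, p x = (Ioc α β).indicator g |x|) :
    ∫ x in Icc (-β) (-α) ∪ Icc α β, p x = 2 * ∫ x in α..β, g x := by
  have hvanish : ∀ x ∉ Icc (-β) (-α) ∪ Icc α β, p x = 0 := by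
    intro x hx
    rw [hp, indicator_of_notMem]
    rintro ⟨h₁, h₂⟩
    rcases abs_cases x with ⟨hx', -⟩ | ⟨hx', -⟩ <;> rw [hx'] at h₁ h₂
    · exact hx (Or.inr ⟨h₁.le, h₂⟩)
    · exact hx (Or.inl ⟨by linarith, by linarith⟩)
  have hIoc : Ioi 0 ∩ Ioc α β = Ioc α β :=
    inter_eq_right.2 fun x hx => hα.trans_lt hx.1
  rw [setIntegral_eq_integral_of_forall_compl_eq_zero hvanish, integral_congr_ae (.of_forall hp),
    integral_comp_abs, setIntegral_indicator measurableSet_Ioc, hIoc,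
    intervalIntegral.integral_of_le hαβ]

theorem ite_sqrt_div_abs_eq_indicator_abs (hα : 0 ≤ α) (hβ : 0 ≤ β) (c x : ℝ) :
    (if α ^ 2 ≤ x ^ 2 ∧ x ^ 2 ≤ β ^ 2 then 1 / (c * |x|) * √((x ^ 2 - α ^ 2) * (β ^ 2 - x ^ 2))
      else 0)
      = (Ioc α β).indicator (fun r => c⁻¹ * (√((r ^ 2 - α ^ 2) * (β ^ 2 - r ^ 2)) / r)) |x| := by
  have hsq : ∀ {u v : ℝ}, 0 ≤ u → 0 ≤ v → (u ^ 2 ≤ v ^ 2 ↔ u ≤ v) := fun hu hv =>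
    pow_le_pow_iff_left₀ hu hv two_ne_zero
  simp only [← sq_abs x, hsq hα (abs_nonneg x), hsq (abs_nonneg x) hβ, indicator_apply]
  split_ifs with hcond hmem hmem
  · rw [one_div, mul_inv]; ring
  · obtain rfl : |x| = α := le_antisymm (not_lt.1 fun h => hmem ⟨h, hcond.2⟩) hcond.1
    simp
  · exact absurd ⟨hmem.1.le, hmem.2⟩ hcond
  · rfl

end

/-- For `y ∈ (0,1]`, the symmetrized Marchenko–Pastur density integrates to `1` over
`[-(1+√y), -(1-√y)] ∪ [(1-√y), (1+√y)]`. -/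
theorem symmetrized_MP_density_integrates_to_one
    (y : ℝ) (hy0 : 0 < y) (hy1 : y ≤ 1)
    (a b : ℝ) (ha : a = (1 - Real.sqrt y) ^ 2) (hb : b = (1 + Real.sqrt y) ^ 2)
    (pt : ℝ → ℝ)
    (hpt : ∀ x, pt x =
      if a ≤ x ^ 2 ∧ x ^ 2 ≤ b then
        (1 / (2 * π * y * |x|)) * Real.sqrt ((x ^ 2 - a) * (b - x ^ 2))
      else 0) :
    ∫ x in (Set.Icc (-(1 + Real.sqrt y)) (-(1 - Real.sqrt y))
        ∪ Set.Icc (1 - Real.sqrt y) (1 + Real.sqrt y)), pt x = 1 := by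
  set t := √y
  have ht : 0 < t := sqrt_pos.2 hy0
  have ht1 : 0 ≤ 1 - t := sub_nonneg.2 (sqrt_le_one.2 hy1)
  have hty : t ^ 2 = y := sq_sqrt hy0.le
  have hp : ∀ x, pt x = (Ioc (1 - t) (1 + t)).indicator
      (fun r => (2 * π * y)⁻¹ * (√((r ^ 2 - (1 - t) ^ 2) * ((1 + t) ^ 2 - r ^ 2)) / r)) |x| := by
    intro x
    rw [hpt, ha, hb]
    exact ite_sqrt_div_abs_eq_indicator_abs ht1 (by linarith) _ x
  rw [setIntegral_union_Icc_neg_eq_two_mul ht1 (by linarith) hp, intervalIntegral.integral_const_mul,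
    integral_sqrt_mul_sub_sq_div_self ht1 (by linarith), ← hty]
  field_simp
  ring
end

section
/- (Trace difference identity) Let A be an n×n symmetric matrix with A and A_k nonsingular resolvents at z = u+iv, v>0. Then Tr(A - zI_n)^{-1} - Tr(A_k - zI_{n-1})^{-1} = (1 + a_k'(A_k - zI_{n-1})^{-2} a_k) / (a_{kk} - z - a_k'(A_k - zI_{n-1})^{-1} a_k), where a_k is the k-th row of A with the k-th entry removed. -/
/-!
Moving the index `k` to the end writes `A - z` as a block matrix with top-left block
`A_k - z`, off-diagonal blocks `a_k`, `a_k'` (equal by symmetry of `A`) and scalar corner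
`a_kk - z`. Block inversion with the scalar Schur complement
`s = a_kk - z - a_k'(A_k - z)⁻¹a_k` gives the diagonal blocks
`(A_k - z)⁻¹ + s⁻¹ (A_k - z)⁻¹ a_k a_k' (A_k - z)⁻¹` and `s⁻¹`, and by cyclicity of the
trace the correction term has trace `s⁻¹ a_k'(A_k - z)⁻² a_k`. The invertibility of `A - z` forces
`s ≠ 0`, since `det (A - z) = det (A_k - z) * s`.
-/

open Matrix

def Fin.succAboveSumEquiv {n : ℕ} (k : Fin (n + 1)) : Fin n ⊕ Unit ≃ Fin (n + 1) :=
  ((finSuccEquiv' k).trans (Equiv.optionEquivSumPUnit (Fin n))).symm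

@[simp]
theorem Fin.succAboveSumEquiv_inl {n : ℕ} (k : Fin (n + 1)) (j : Fin n) :
    k.succAboveSumEquiv (.inl j) = k.succAbove j := by
  simp [succAboveSumEquiv, finSuccEquiv'_symm_some]

@[simp]
theorem Fin.succAboveSumEquiv_inr {n : ℕ} (k : Fin (n + 1)) (u : Unit) :
    k.succAboveSumEquiv (.inr u) = k := by
  simp [succAboveSumEquiv, finSuccEquiv'_symm_none]

namespace Matrix

variable {K : Type*} [Field K] {m : Type*} [Fintype m]

theorem trace_fromBlocks {R n : Type*} [AddCommMonoid R] [Fintype n]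
    (A : Matrix m m R) (B : Matrix m n R) (C : Matrix n m R) (D : Matrix n n R) :
    (fromBlocks A B C D).trace = A.trace + D.trace := by
  simp [trace, Fintype.sum_sum_type]

theorem trace_inv_submatrix_equiv [DecidableEq m] {n : Type*} [Fintype n] [DecidableEq n]
    (M : Matrix m m K) (e : n ≃ m) : (M.submatrix e e)⁻¹.trace = M⁻¹.trace := by
  rw [inv_submatrix_equiv]
  exact e.sum_comp fun i => M⁻¹ i i

theorem replicateRow_mul_mul_replicateCol {ι : Type*} (c b : m → K) (N : Matrix m m K) :
    replicateRow ι c * N * replicateCol ι b = of fun _ _ => c ⬝ᵥ (N *ᵥ b) := by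
  rw [Matrix.mul_assoc, ← replicateCol_mulVec, replicateRow_mul_replicateCol]

theorem trace_inv_fromBlocks_replicateCol_replicateRow [DecidableEq m] (C : Matrix m m K)
    (b c : m → K) (d : K) (hC : IsUnit C.det)
    (hM : IsUnit (fromBlocks C (replicateCol Unit b) (replicateRow Unit c) (of fun _ _ => d)).det) :
    (fromBlocks C (replicateCol Unit b) (replicateRow Unit c) (of fun _ _ => d))⁻¹.trace
      = C⁻¹.trace + (1 + c ⬝ᵥ (C⁻¹ ^ 2 *ᵥ b)) / (d - c ⬝ᵥ (C⁻¹ *ᵥ b)) := by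
  set s := d - c ⬝ᵥ (C⁻¹ *ᵥ b)
  let := C.invertibleOfIsUnitDet hC
  have hschur : (of fun _ _ => d) - replicateRow Unit c * ⅟C * replicateCol Unit b
      = (of fun _ _ => s : Matrix Unit Unit K) := by
    rw [replicateRow_mul_mul_replicateCol, invOf_eq_nonsing_inv]
    rfl
  have hs : s ≠ 0 := by
    rw [det_fromBlocks₁₁, hschur] at hM
    simpa using (isUnit_of_mul_isUnit_right hM).ne_zero
  let := invertibleOfIsUnitDet _ hM
  let := invertibleOfFromBlocks₁₁Invertible C (replicateCol Unit b) (replicateRow Unit c)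
    (of fun _ _ => d)
  have hschur_inv : ⅟((of fun _ _ => d) - replicateRow Unit c * ⅟C * replicateCol Unit b)
      = (of fun _ _ => s⁻¹ : Matrix Unit Unit K) :=
    invOf_eq_right_inv (by rw [hschur]; ext; simp [mul_apply, hs])
  set S' : Matrix Unit Unit K := of fun _ _ => s⁻¹
  have hcorr : (C⁻¹ * replicateCol Unit b * S' * replicateRow Unit c * C⁻¹).trace
      = s⁻¹ * (c ⬝ᵥ (C⁻¹ ^ 2 *ᵥ b)) := calc
    _ = ((C⁻¹ * replicateCol Unit b) * (S' * replicateRow Unit c * C⁻¹)).trace := by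
      simp only [Matrix.mul_assoc]
    _ = ((S' * replicateRow Unit c * C⁻¹) * (C⁻¹ * replicateCol Unit b)).trace :=
      trace_mul_comm _ _
    _ = (S' * (replicateRow Unit c * C⁻¹ ^ 2 * replicateCol Unit b)).trace := by
      simp only [sq, Matrix.mul_assoc]
    _ = s⁻¹ * (c ⬝ᵥ (C⁻¹ ^ 2 *ᵥ b)) := by
      simp [S', replicateRow_mul_mul_replicateCol, trace, mul_apply]
  rw [← invOf_eq_nonsing_inv, invOf_fromBlocks₁₁_eq, hschur_inv, invOf_eq_nonsing_inv C,
    trace_fromBlocks, trace_add, hcorr, show S'.trace = s⁻¹ by simp [S', trace]]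
  field_simp
  ring

theorem submatrix_succAboveSumEquiv {α : Type*} {n : ℕ}
    (M : Matrix (Fin (n + 1)) (Fin (n + 1)) α) (k : Fin (n + 1)) :
    M.submatrix k.succAboveSumEquiv k.succAboveSumEquiv =
      fromBlocks (M.submatrix k.succAbove k.succAbove)
        (replicateCol Unit fun i => M (k.succAbove i) k)
        (replicateRow Unit fun j => M k (k.succAbove j)) (of fun _ _ => M k k) := by
  ext (i | i) (j | j) <;> simp

theorem trace_inv_sub_trace_inv_submatrix_succAbove {n : ℕ}
    (M : Matrix (Fin (n + 1)) (Fin (n + 1)) K) (k : Fin (n + 1)) (hM : IsUnit M.det)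
    (hMk : IsUnit (M.submatrix k.succAbove k.succAbove).det) :
    M⁻¹.trace - (M.submatrix k.succAbove k.succAbove)⁻¹.trace
      = (1 + (fun j => M k (k.succAbove j)) ⬝ᵥ
            ((M.submatrix k.succAbove k.succAbove)⁻¹ ^ 2 *ᵥ fun i => M (k.succAbove i) k))
        / (M k k - (fun j => M k (k.succAbove j)) ⬝ᵥ
            ((M.submatrix k.succAbove k.succAbove)⁻¹ *ᵥ fun i => M (k.succAbove i) k)) := by
  rw [← det_submatrix_equiv_self k.succAboveSumEquiv, submatrix_succAboveSumEquiv] at hM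
  rw [← trace_inv_submatrix_equiv M k.succAboveSumEquiv, submatrix_succAboveSumEquiv,
    trace_inv_fromBlocks_replicateCol_replicateRow _ _ _ _ hMk hM, add_sub_cancel_left]

end Matrix

theorem resolvent_trace_difference_identity_general
    (n : ℕ) (A : Matrix (Fin (n + 1)) (Fin (n + 1)) ℝ) (hA : A.IsSymm)
    (k : Fin (n + 1)) (z : ℂ)
    (Ak : Matrix (Fin n) (Fin n) ℝ)
    (hAk : Ak = A.submatrix k.succAbove k.succAbove)
    (ak : Fin n → ℂ) (hak : ak = fun j => (A k (k.succAbove j) : ℂ))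
    (hAinv : IsUnit (A.map (Complex.ofReal) - z • 1).det)
    (hAkinv : IsUnit (Ak.map (Complex.ofReal) - z • 1).det) :
    ((A.map (Complex.ofReal) - z • 1)⁻¹).trace
        - ((Ak.map (Complex.ofReal) - z • 1)⁻¹).trace
      = (1 + ak ⬝ᵥ (((Ak.map (Complex.ofReal) - z • 1)⁻¹ ^ 2) *ᵥ ak))
        / ((A k k : ℂ) - z - ak ⬝ᵥ ((Ak.map (Complex.ofReal) - z • 1)⁻¹ *ᵥ ak)) := by
  subst hAk hak
  set B := A.map Complex.ofReal - z • 1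
  have hsub : (A.submatrix k.succAbove k.succAbove).map Complex.ofReal - z • 1
      = B.submatrix k.succAbove k.succAbove := by
    rw [← submatrix_one k.succAbove Fin.succAbove_right_injective]
    rfl
  have hcol : (fun i => B (k.succAbove i) k) = fun j => (A k (k.succAbove j) : ℂ) := by
    ext i
    simp [B, one_apply, Fin.succAbove_ne, hA.apply]
  have hrow : (fun j => B k (k.succAbove j)) = fun j => (A k (k.succAbove j) : ℂ) := by
    ext j
    simp [B, one_apply, (Fin.succAbove_ne k j).symm]
  have hcorner : B k k = A k k - z := by simp [B]
  rw [hsub] at hAkinv ⊢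
  simpa only [hcol, hrow, hcorner] using
    trace_inv_sub_trace_inv_submatrix_succAbove B k hAinv hAkinv

/-- Trace difference identity: for a real symmetric `A`, `z` in the upper half-plane,
`Tr(A - zI)⁻¹ - Tr(A_k - zI)⁻¹
  = (1 + a_k'(A_k - zI)⁻² a_k)/(a_{kk} - z - a_k'(A_k - zI)⁻¹ a_k)`,
where `a_k` is the `k`-th row of `A` with the `k`-th entry removed. -/
theorem resolvent_trace_difference_identity
    (n : ℕ) (A : Matrix (Fin (n + 1)) (Fin (n + 1)) ℝ) (hA : A.IsSymm)
    (k : Fin (n + 1)) (z : ℂ) (hz : 0 < z.im)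
    (Ak : Matrix (Fin n) (Fin n) ℝ)
    (hAk : Ak = A.submatrix k.succAbove k.succAbove)
    (ak : Fin n → ℂ) (hak : ak = fun j => (A k (k.succAbove j) : ℂ))
    (hAinv : IsUnit (A.map (Complex.ofReal) - z • 1).det)
    (hAkinv : IsUnit (Ak.map (Complex.ofReal) - z • 1).det) :
    ((A.map (Complex.ofReal) - z • 1)⁻¹).trace
        - ((Ak.map (Complex.ofReal) - z • 1)⁻¹).trace
      = (1 + ak ⬝ᵥ (((Ak.map (Complex.ofReal) - z • 1)⁻¹ ^ 2) *ᵥ ak))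
        / ((A k k : ℂ) - z - ak ⬝ᵥ ((Ak.map (Complex.ofReal) - z • 1)⁻¹ *ᵥ ak)) :=
  resolvent_trace_difference_identity_general n A hA k z Ak hAk ak hak hAinv hAkinv
end
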